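/- arXiv:2311.00529 — 2 statements merged into one kernel-verified Lean document; each statement's English description precedes it below -/
import Mathlib

section
/- Let X, Y be real Hilbert spaces, T : X → Y bounded linear with operator norm ‖T‖, f ∈ Y, u* ∈ X with T u* = f, and suppose ‖Tu‖²_Y ≥ α |||u|||² for a seminorm |||·||| and α > 0. Let F ⊆ X be any nonempty subset and let v ∈ F. Define E(u) = ½‖Tu − f‖²_Y and δ = E(v) − inf_{w ∈ F} E(w). Then |||v − u*|||² ≤ (2δ)/α + (‖T‖²/α) · inf_{w ∈ F} ‖w − u*‖²_X. -/
/-! The residual of any `w` is controlled by its distance to `u*`, since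
`T w - f = T (w - u*)`; hence `inf_F E ≤ ½ ‖T‖² inf_F ‖w - u*‖²`. Coercivity then gives
`α |||v - u*|||² ≤ ‖T (v - u*)‖² = 2 E(v) = 2 δ + 2 inf_F E`. -/

theorem ContinuousLinearMap.norm_map_sub_map_sq_le {𝕜 E F : Type*} [NontriviallyNormedField 𝕜]
    [SeminormedAddCommGroup E] [NormedSpace 𝕜 E] [SeminormedAddCommGroup F] [NormedSpace 𝕜 F]
    (T : E →L[𝕜] F) (u u₀ : E) : ‖T u - T u₀‖ ^ 2 ≤ ‖T‖ ^ 2 * ‖u - u₀‖ ^ 2 := by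
  rw [← map_sub, ← mul_pow]
  exact pow_le_pow_left₀ (norm_nonneg _) (T.le_opNorm _) 2

theorem Real.iInf_le_mul_iInf_of_le {ι : Sort*} {f g : ι → ℝ} {c : ℝ} (hc : 0 ≤ c)
    (hf : ∀ i, 0 ≤ f i) (hfg : ∀ i, f i ≤ c * g i) : ⨅ i, f i ≤ c * ⨅ i, g i := by
  rw [Real.mul_iInf_of_nonneg hc]
  exact ciInf_mono ⟨0, by rintro _ ⟨i, rfl⟩; exact hf i⟩ hfg

theorem cea_lemma_pinns_general
    {X Y : Type*} [NormedAddCommGroup X] [InnerProductSpace ℝ X]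
    [NormedAddCommGroup Y] [InnerProductSpace ℝ Y]
    (T : X →L[ℝ] Y) (f : Y) (ustar : X) (hsol : T ustar = f)
    (N : Seminorm ℝ X) (α : ℝ) (hα : 0 < α)
    (hcoerc : ∀ u : X, α * (N u)^2 ≤ ‖T u‖^2)
    (F : Set X) (v : X)
    (E : X → ℝ) (hE : ∀ u, E u = (1/2 : ℝ) * ‖T u - f‖^2)
    (δ : ℝ) (hδ : δ = E v - ⨅ w : F, E w) :
    (N (v - ustar))^2
      ≤ 2 * δ / α + (‖T‖^2 / α) * ⨅ w : F, ‖(w : X) - ustar‖^2 := by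
  have hinf : ⨅ w : F, E w ≤ ‖T‖ ^ 2 / 2 * ⨅ w : F, ‖(w : X) - ustar‖ ^ 2 := by
    refine Real.iInf_le_mul_iInf_of_le (by positivity) (fun w => by rw [hE]; positivity) ?_
    intro w
    rw [hE, ← hsol]
    linarith [T.norm_map_sub_map_sq_le w ustar]
  rw [div_mul_eq_mul_div, ← add_div, le_div_iff₀ hα, mul_comm]
  calc α * N (v - ustar) ^ 2 ≤ ‖T (v - ustar)‖ ^ 2 := hcoerc _
    _ = 2 * δ + 2 * ⨅ w : F, E w := by rw [hδ, hE, map_sub, hsol]; ring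
    _ ≤ 2 * δ + ‖T‖ ^ 2 * ⨅ w : F, ‖(w : X) - ustar‖ ^ 2 := by linarith

theorem cea_lemma_pinns
    {X Y : Type*} [NormedAddCommGroup X] [InnerProductSpace ℝ X] [CompleteSpace X]
    [NormedAddCommGroup Y] [InnerProductSpace ℝ Y] [CompleteSpace Y]
    (T : X →L[ℝ] Y) (f : Y) (ustar : X) (hsol : T ustar = f)
    (N : Seminorm ℝ X) (α : ℝ) (hα : 0 < α)
    (hcoerc : ∀ u : X, α * (N u)^2 ≤ ‖T u‖^2)
    (F : Set X) (hF : F.Nonempty) (v : X) (hv : v ∈ F)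
    (E : X → ℝ) (hE : ∀ u, E u = (1/2 : ℝ) * ‖T u - f‖^2)
    (δ : ℝ) (hδ : δ = E v - ⨅ w : F, E w) :
    (N (v - ustar))^2
      ≤ 2 * δ / α + (‖T‖^2 / α) * ⨅ w : F, ‖(w : X) - ustar‖^2 :=
  cea_lemma_pinns_general T f ustar hsol N α hα hcoerc F v E hE δ hδ
end

section
/- Let X be a real Hilbert space, F ⊆ X a nonempty subset, u* ∈ X, and suppose a bilinear form a on X satisfies α|||u|||² ≤ a(u,u) ≤ M‖u‖²_X for all u (with |||·||| a seminorm, α, M > 0). Then for any v ∈ F, α|||v − u*|||² ≤ 2(E(v) − inf_{w∈F} E(w)) + M·inf_{w∈F}‖w − u*‖²_X, where E(u) = ½ a(u − u*, u − u*). -/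
theorem abstract_cea_quadratic
    {X : Type*} [NormedAddCommGroup X] [InnerProductSpace ℝ X] [CompleteSpace X]
    (a : X → X → ℝ) (N : Seminorm ℝ X) (α M : ℝ) (hα : 0 < α) (hM : 0 < M)
    (hcoerc : ∀ u : X, α * (N u)^2 ≤ a u u)
    (hcont : ∀ u : X, a u u ≤ M * ‖u‖^2)
    (ustar : X) (E : X → ℝ)
    (hE : ∀ u, E u = (1/2 : ℝ) * a (u - ustar) (u - ustar))
    (F : Set X) (hF : F.Nonempty) (v : X) (hv : v ∈ F) :
    α * (N (v - ustar))^2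
      ≤ 2 * (E v - ⨅ w : F, E w) + M * ⨅ w : F, ‖(w : X) - ustar‖^2 := by
  haveI : Nonempty F := hF.to_subtype
  have hEnn : ∀ u, 0 ≤ E u := by
    intro u
    rw [hE u]
    have h1 : (0:ℝ) ≤ α * (N (u - ustar))^2 :=
      mul_nonneg hα.le (sq_nonneg _)
    linarith [hcoerc (u - ustar)]
  have hbdd : BddBelow (Set.range fun w : F => E w) :=
    ⟨0, by rintro x ⟨w, rfl⟩; exact hEnn w⟩
  set I := ⨅ w : F, E w with hI
  have h2I : 2 * I ≤ M * ⨅ w : F, ‖(w : X) - ustar‖^2 := by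
    rw [Real.mul_iInf_of_nonneg hM.le]
    apply le_ciInf
    intro w
    have h1 : I ≤ E w := ciInf_le hbdd w
    have h2 : 2 * E w ≤ M * ‖(w : X) - ustar‖^2 := by
      have := hcont ((w : X) - ustar)
      rw [hE]; linarith
    linarith
  have hmain : α * (N (v - ustar))^2 ≤ 2 * E v := by
    have := hcoerc (v - ustar)
    rw [hE]; linarith
  linarith
end
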